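/- Let S be a numerical semigroup with conductor c, let m ≥ 2c, let δ ∈ S ∩ [0, c] maximize Δ(δ) = δ + 2n(δ) where n(δ) = |S ∩ [δ, c−1]|, and set d := m − 1 + 2c − 2n(δ). Define D_A = D_B := (S ∩ [δ, c−1]) ∪ [c, d−c] ∪ (d − (S ∩ [δ, c−1])). Then |D_A| = m, D_A ⊆ S, there are exactly m pairs (a,b) ∈ D_A × D_B with a + b = d, and any solution D_A′, D_B′ ⊆ S with |D_A′| = |D_B′| = m and exactly m pairs summing to some d′ satisfies max(D_A′) + max(D_B′) ≥ max(D_A) + max(D_B) = 2(d − δ). -/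
import Mathlib


/-- A numerical semigroup: a cofinite additive submonoid of ℕ. -/
def IsNumericalSemigroup (S : Set ℕ) : Prop :=
  0 ∈ S ∧ (∀ a ∈ S, ∀ b ∈ S, a + b ∈ S) ∧ (Sᶜ : Set ℕ).Finite

/-- The sgConductor of a numerical semigroup: least c with [c,∞) ⊆ S. -/
noncomputable def sgConductor (S : Set ℕ) : ℕ :=
  sInf {c | ∀ n, c ≤ n → n ∈ S}

/-- A solution to the AG matdot code problem with parameter m and sum value d. -/
def MatdotSolution (S : Set ℕ) (m : ℕ) (DA DB : Set ℕ) (d : ℕ) : Prop :=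
  DA ⊆ S ∧ DB ⊆ S ∧ DA.Finite ∧ DB.Finite ∧ DA.ncard = m ∧ DB.ncard = m ∧
  {p : ℕ × ℕ | p ∈ DA ×ˢ DB ∧ p.1 + p.2 = d}.ncard = m



lemma ncard_Icc (a b : ℕ) : (Set.Icc a b).ncard = b + 1 - a := by
  rw [← Finset.coe_Icc, Set.ncard_coe_finset, Nat.card_Icc]

lemma ncard_Ico (a b : ℕ) : (Set.Ico a b).ncard = b - a := by
  rw [← Finset.coe_Ico, Set.ncard_coe_finset, Nat.card_Ico]

lemma conductor_spec (S : Set ℕ) (hS : IsNumericalSemigroup S) :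
    ∀ x, sgConductor S ≤ x → x ∈ S := by
  obtain ⟨-, -, hfin⟩ := hS
  have hne : {c | ∀ n, c ≤ n → n ∈ S}.Nonempty := by
    obtain ⟨k, hk⟩ := hfin.bddAbove
    exact ⟨k + 1, fun n hn => by_contra fun hns => absurd (hk hns) (by omega)⟩
  exact Nat.sInf_mem hne

lemma conductor_min (S : Set ℕ) (hS : IsNumericalSemigroup S) (h1 : 1 ≤ sgConductor S) :
    sgConductor S - 1 ∉ S := by
  intro hmem
  have : sgConductor S ≤ sgConductor S - 1 :=
    Nat.sInf_le (fun n hn => by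
      rcases Nat.eq_or_lt_of_le hn with h | h
      · exact h ▸ hmem
      · exact conductor_spec S hS n (by omega))
  omega

lemma matdot_struct_A (DA DB : Set ℕ) (d m : ℕ) (hA : DA.Finite)
    (hcard : DA.ncard = m)
    (hP : {p : ℕ × ℕ | p ∈ DA ×ˢ DB ∧ p.1 + p.2 = d}.ncard = m) :
    ∀ a ∈ DA, a ≤ d ∧ d - a ∈ DB := by
  set P := {p : ℕ × ℕ | p ∈ DA ×ˢ DB ∧ p.1 + p.2 = d} with hPdef
  have hsub : P ⊆ (fun a => (a, d - a)) '' DA := by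
    rintro ⟨x, y⟩ ⟨⟨hx, hy⟩, hsum⟩
    exact ⟨x, hx, by simp only []; congr 1; omega⟩
  have himfin : ((fun a => (a, d - a)) '' DA).Finite := hA.image _
  have hle : ((fun a => (a, d - a)) '' DA).ncard ≤ P.ncard := by
    rw [hP, ← hcard]
    exact le_trans (Set.ncard_image_le hA) (le_refl _)
  have heq : P = (fun a => (a, d - a)) '' DA :=
    Set.eq_of_subset_of_ncard_le hsub hle himfin
  intro a ha
  have : (a, d - a) ∈ P := heq ▸ ⟨a, ha, rfl⟩
  obtain ⟨⟨-, hb⟩, hsum⟩ := this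
  exact ⟨by omega, hb⟩

lemma matdot_struct_B (DA DB : Set ℕ) (d m : ℕ) (hB : DB.Finite)
    (hcard : DB.ncard = m)
    (hP : {p : ℕ × ℕ | p ∈ DA ×ˢ DB ∧ p.1 + p.2 = d}.ncard = m) :
    ∀ b ∈ DB, b ≤ d ∧ d - b ∈ DA := by
  set P := {p : ℕ × ℕ | p ∈ DA ×ˢ DB ∧ p.1 + p.2 = d} with hPdef
  have hsub : P ⊆ (fun b => (d - b, b)) '' DB := by
    rintro ⟨x, y⟩ ⟨⟨hx, hy⟩, hsum⟩
    exact ⟨y, hy, by simp only []; congr 1; omega⟩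
  have himfin : ((fun b => (d - b, b)) '' DB).Finite := hB.image _
  have hle : ((fun b => (d - b, b)) '' DB).ncard ≤ P.ncard := by
    rw [hP, ← hcard]
    exact Set.ncard_image_le hB
  have heq : P = (fun b => (d - b, b)) '' DB :=
    Set.eq_of_subset_of_ncard_le hsub hle himfin
  intro b hb
  have : (d - b, b) ∈ P := heq ▸ ⟨b, hb, rfl⟩
  obtain ⟨⟨ha, -⟩, hsum⟩ := this
  exact ⟨by omega, ha⟩

lemma key_arith (m c δ n d a0 b0 d' n1 n3 L u v : ℕ)
    (hm1 : 1 ≤ m) (hm : 2*c ≤ m) (hδc : δ ≤ c)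
    (hd : d = m - 1 + 2*c - 2*n) (hnc : n ≤ c - δ) (hnc1 : 1 ≤ c → n ≤ c-1)
    (hΔc : c ≤ δ + 2*n)
    (ha0d : a0 ≤ d') (hb0d : b0 ≤ d')
    (hcount : m ≤ n1 + L + n3)
    (hL : L = v + 1 - u) (hu1 : c ≤ u) (hu2 : a0 ≤ u)
    (hv1 : v ≤ d' - c) (hv2 : v ≤ d' - b0)
    (hmaxa : a0 ≤ c → a0 + 2*n1 ≤ δ + 2*n) (hmaxb : b0 ≤ c → b0 + 2*n3 ≤ δ + 2*n)
    (hn1e : c ≤ a0 → n1 = 0) (hn3e : c ≤ b0 → n3 = 0)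
    (hn1b : 1 ≤ c → n1 ≤ c-1) (hn3b : 1 ≤ c → n3 ≤ c-1) :
    2*(d-δ) ≤ (d'-b0) + (d'-a0) := by omega

/-- Theorem: explicit optimal solution to the AG matdot code problem for m ≥ 2c(S). -/
theorem stmt18 (S : Set ℕ) (hS : IsNumericalSemigroup S) (m : ℕ) (hm1 : 1 ≤ m)
    (hm : 2 * sgConductor S ≤ m) (δ : ℕ) (hδS : δ ∈ S) (hδc : δ ≤ sgConductor S)
    (hmax : ∀ δ' ∈ S, δ' ≤ sgConductor S →
      δ' + 2 * (S ∩ Set.Ico δ' (sgConductor S)).ncard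
        ≤ δ + 2 * (S ∩ Set.Ico δ (sgConductor S)).ncard) :
    ∀ c d : ℕ, c = sgConductor S →
      d = m - 1 + 2 * c - 2 * (S ∩ Set.Ico δ c).ncard →
    ∀ DA : Set ℕ, DA = (S ∩ Set.Ico δ c) ∪ Set.Icc c (d - c)
        ∪ (fun x => d - x) '' (S ∩ Set.Ico δ c) →
    DA.ncard = m ∧ DA ⊆ S ∧
    {p : ℕ × ℕ | p ∈ DA ×ˢ DA ∧ p.1 + p.2 = d}.ncard = m ∧
    (∀ DA' DB' d', MatdotSolution S m DA' DB' d' →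
      sSup DA + sSup DA ≤ sSup DA' + sSup DB') ∧
    sSup DA + sSup DA = 2 * (d - δ) := by
  intro c d hc hd DA hDA
  rw [← hc] at hm hδc hmax
  have hcS : ∀ x, c ≤ x → x ∈ S := by rw [hc]; exact conductor_spec S hS
  have hc1 : 1 ≤ c → c - 1 ∉ S := by rw [hc]; exact conductor_min S hS
  set n := (S ∩ Set.Ico δ c).ncard with hn
  -- generic bound on counts
  have hbound : ∀ x : ℕ, 1 ≤ c → (S ∩ Set.Ico x c).ncard ≤ c - 1 := by
    intro x h1
    have hsub : S ∩ Set.Ico x c ⊆ Set.Ico 0 (c - 1) := by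
      rintro y ⟨hyS, -, hy2⟩
      refine ⟨Nat.zero_le _, ?_⟩
      by_contra hy
      have : y = c - 1 := by omega
      exact hc1 h1 (this ▸ hyS)
    calc (S ∩ Set.Ico x c).ncard ≤ (Set.Ico 0 (c - 1)).ncard :=
          Set.ncard_le_ncard hsub (Set.finite_Ico _ _)
      _ = c - 1 := by rw [ncard_Ico]; omega
  have hnc : n ≤ c - δ := by
    calc n ≤ (Set.Ico δ c).ncard :=
          Set.ncard_le_ncard Set.inter_subset_right (Set.finite_Ico _ _)
      _ = c - δ := by rw [ncard_Ico]
  have hnc1 : 1 ≤ c → n ≤ c - 1 := hbound δ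
  have hΔc : c ≤ δ + 2 * n := by
    have := hmax c (hcS c le_rfl) le_rfl
    simp only [Set.Ico_self, Set.inter_empty, Set.ncard_empty] at this
    omega
  -- basic bounds on d
  have hdge : 2 * c + δ ≤ d ∧ d + 2 * n = m - 1 + 2 * c := by
    rcases Nat.eq_zero_or_pos c with h | h
    · have : n = 0 := by omega
      omega
    · have := hnc1 h
      omega
  set A := S ∩ Set.Ico δ c with hA
  set B := Set.Icc c (d - c) with hB
  set C := (fun x => d - x) '' A with hC
  have hAfin : A.Finite := (Set.finite_Ico δ c).subset Set.inter_subset_right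
  have hBfin : B.Finite := Set.finite_Icc _ _
  have hCfin : C.Finite := hAfin.image _
  have hArange : ∀ x ∈ A, δ ≤ x ∧ x < c ∧ x ∈ S := by
    rintro x ⟨hxS, hx1, hx2⟩; exact ⟨hx1, hx2, hxS⟩
  have hCrange : ∀ y ∈ C, d - c + 1 ≤ y ∧ y ≤ d - δ ∧ y ∈ S := by
    rintro y ⟨x, hx, heq⟩
    have heq' : d - x = y := heq
    subst heq'
    obtain ⟨h1, h2, -⟩ := hArange x hx
    exact ⟨by omega, by omega, hcS _ (by omega)⟩
  -- DA ⊆ S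
  have hDAS : DA ⊆ S := by
    rw [hDA]
    rintro x ((hx | hx) | hx)
    · exact (hArange x hx).2.2
    · exact hcS x hx.1
    · exact (hCrange x hx).2.2
  -- cardinality of DA
  have hAcard : A.ncard = n := rfl
  have hBcard : B.ncard = d - c + 1 - c := by rw [hB, ncard_Icc]
  have hCcard : C.ncard = n := by
    rw [hC, Set.ncard_image_of_injOn]
    rintro x ⟨-, hx⟩ y ⟨-, hy⟩ hxy
    simp only [Set.mem_Ico] at hx hy
    have hxy' : d - x = d - y := hxy
    omega
  have hABd : Disjoint A B := by
    rw [Set.disjoint_left]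
    intro x hx hxB
    have := (hArange x hx).2.1
    have := hxB.1
    omega
  have hABC : Disjoint (A ∪ B) C := by
    rw [Set.disjoint_left]
    rintro x (hx | hx) hxC
    · have := (hArange x hx).2.1
      have := (hCrange x hxC).1
      omega
    · have := hx.2
      have := (hCrange x hxC).1
      omega
  have hDAcard : DA.ncard = m := by
    rw [hDA, Set.ncard_union_eq hABC (hAfin.union hBfin) hCfin,
      Set.ncard_union_eq hABd hAfin hBfin, hAcard, hBcard, hCcard]
    omega
  -- symmetry of DA about d
  have hsym : ∀ a ∈ DA, a ≤ d ∧ d - a ∈ DA := by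
    rw [hDA]
    rintro a ((ha | ha) | ha)
    · obtain ⟨h1, h2, h3⟩ := hArange a ha
      exact ⟨by omega, Or.inr ⟨a, ha, rfl⟩⟩
    · obtain ⟨h1, h2⟩ := ha
      exact ⟨by omega, Or.inl (Or.inr ⟨by omega, by omega⟩)⟩
    · obtain ⟨x, hx, heq⟩ := ha
      have heq' : d - x = a := heq
      subst heq'
      obtain ⟨h1, h2, -⟩ := hArange x hx
      refine ⟨by omega, Or.inl (Or.inl ?_)⟩
      have hxd : d - (d - x) = x := by omega
      rw [hxd]
      exact hx
  -- the pair set is the graph of a ↦ (a, d - a)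
  have hPset : {p : ℕ × ℕ | p ∈ DA ×ˢ DA ∧ p.1 + p.2 = d}
      = (fun a => (a, d - a)) '' DA := by
    ext ⟨x, y⟩
    constructor
    · rintro ⟨⟨hx, hy⟩, hsum⟩
      refine ⟨x, hx, ?_⟩
      have hy' : y = d - x := by omega
      rw [hy']
    · rintro ⟨a, ha, heq⟩
      simp only [Prod.mk.injEq] at heq
      obtain ⟨rfl, rfl⟩ := heq
      obtain ⟨h1, h2⟩ := hsym a ha
      exact ⟨⟨ha, h2⟩, by omega⟩
  have hPcard : {p : ℕ × ℕ | p ∈ DA ×ˢ DA ∧ p.1 + p.2 = d}.ncard = m := by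
    rw [hPset, Set.ncard_image_of_injective _ (fun a b h => congrArg Prod.fst h),
      hDAcard]
  -- sSup DA = d - δ
  have hDAub : ∀ x ∈ DA, x ≤ d - δ := by
    rw [hDA]
    rintro x ((hx | hx) | hx)
    · have := (hArange x hx).2.1
      omega
    · have := hx.2
      omega
    · exact (hCrange x hx).2.1
  have hDAmem : d - δ ∈ DA := by
    rw [hDA]
    rcases Nat.lt_or_ge δ c with h | h
    · exact Or.inr ⟨δ, ⟨hδS, le_rfl, h⟩, rfl⟩
    · have hδeq : δ = c := le_antisymm hδc h
      exact Or.inl (Or.inr ⟨by omega, by omega⟩)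
  have hsup : sSup DA = d - δ :=
    le_antisymm (csSup_le ⟨_, hDAmem⟩ hDAub) (le_csSup ⟨d - δ, hDAub⟩ hDAmem)
  refine ⟨hDAcard, hDAS, hPcard, ?_, by rw [hsup]; omega⟩
  -- optimality
  intro DA' DB' d' hsol
  obtain ⟨hA'S, hB'S, hA'fin, hB'fin, hA'card, hB'card, hP'⟩ := hsol
  rw [hsup]
  have hstA := matdot_struct_A DA' DB' d' m hA'fin hA'card hP'
  have hstB := matdot_struct_B DA' DB' d' m hB'fin hB'card hP'
  have hA'ne : DA'.Nonempty := Set.nonempty_of_ncard_ne_zero (by omega)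
  have hB'ne : DB'.Nonempty := Set.nonempty_of_ncard_ne_zero (by omega)
  set a0 := sInf DA' with ha0def
  set b0 := sInf DB' with hb0def
  have ha0 : a0 ∈ DA' := Nat.sInf_mem hA'ne
  have hb0 : b0 ∈ DB' := Nat.sInf_mem hB'ne
  have ha0d : a0 ≤ d' := (hstA a0 ha0).1
  have hb0d : b0 ≤ d' := (hstB b0 hb0).1
  have hMa : d' - b0 ∈ DA' := (hstB b0 hb0).2
  have hMb : d' - a0 ∈ DB' := (hstA a0 ha0).2
  have hsupA : d' - b0 ≤ sSup DA' := le_csSup hA'fin.bddAbove hMa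
  have hsupB : d' - a0 ≤ sSup DB' := le_csSup hB'fin.bddAbove hMb
  -- counting argument
  set n1 := (S ∩ Set.Ico a0 c).ncard with hn1
  set n3 := (S ∩ Set.Ico b0 c).ncard with hn3
  set Y := Set.Icc (max c a0) (min (d' - c) (d' - b0)) with hY
  have hcover : DA' ⊆ (S ∩ Set.Ico a0 c) ∪ Y ∪ ((fun y => d' - y) '' (S ∩ Set.Ico b0 c)) := by
    intro x hx
    have hxS : x ∈ S := hA'S hx
    have hxd : x ≤ d' := (hstA x hx).1
    have hdx : d' - x ∈ DB' := (hstA x hx).2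
    have hxa0 : a0 ≤ x := Nat.sInf_le hx
    have hdxb0 : b0 ≤ d' - x := Nat.sInf_le hdx
    rcases Nat.lt_or_ge x c with h | h
    · exact Or.inl (Or.inl ⟨hxS, hxa0, h⟩)
    · rcases le_or_gt x (d' - c) with h2 | h2
      · exact Or.inl (Or.inr ⟨max_le h hxa0, le_min h2 (by omega)⟩)
      · refine Or.inr ⟨d' - x, ⟨hB'S hdx, hdxb0, by omega⟩, ?_⟩
        show d' - (d' - x) = x
        omega
  have hcount : m ≤ n1 + Y.ncard + n3 := by
    calc m = DA'.ncard := hA'card.symm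
      _ ≤ ((S ∩ Set.Ico a0 c) ∪ Y ∪ ((fun y => d' - y) '' (S ∩ Set.Ico b0 c))).ncard := by
          refine Set.ncard_le_ncard hcover ?_
          exact (((Set.finite_Ico a0 c).subset Set.inter_subset_right).union
            (Set.finite_Icc _ _)).union
            (((Set.finite_Ico b0 c).subset Set.inter_subset_right).image _)
      _ ≤ ((S ∩ Set.Ico a0 c) ∪ Y).ncard
            + ((fun y => d' - y) '' (S ∩ Set.Ico b0 c)).ncard := Set.ncard_union_le _ _
      _ ≤ (S ∩ Set.Ico a0 c).ncard + Y.ncard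
            + ((fun y => d' - y) '' (S ∩ Set.Ico b0 c)).ncard := by
          have := Set.ncard_union_le (S ∩ Set.Ico a0 c) Y
          omega
      _ ≤ n1 + Y.ncard + n3 := by
          have := Set.ncard_image_le (f := fun y => d' - y)
            ((Set.finite_Ico b0 c).subset (Set.inter_subset_right (s := S)))
          omega
  -- bounds for omega
  have hYcard : Y.ncard = min (d' - c) (d' - b0) + 1 - max c a0 := by rw [hY, ncard_Icc]
  have humax : c ≤ max c a0 ∧ a0 ≤ max c a0 := ⟨le_max_left _ _, le_max_right _ _⟩
  have hvmin : min (d' - c) (d' - b0) ≤ d' - c ∧ min (d' - c) (d' - b0) ≤ d' - b0 :=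
    ⟨min_le_left _ _, min_le_right _ _⟩
  have hmaxa : a0 ≤ c → a0 + 2 * n1 ≤ δ + 2 * n := fun h => hmax a0 (hA'S ha0) h
  have hmaxb : b0 ≤ c → b0 + 2 * n3 ≤ δ + 2 * n := fun h => hmax b0 (hB'S hb0) h
  have hn1e : c ≤ a0 → n1 = 0 := by
    intro h
    rw [hn1, Set.Ico_eq_empty (by omega), Set.inter_empty, Set.ncard_empty]
  have hn3e : c ≤ b0 → n3 = 0 := by
    intro h
    rw [hn3, Set.Ico_eq_empty (by omega), Set.inter_empty, Set.ncard_empty]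
  have hn1b : 1 ≤ c → n1 ≤ c - 1 := hbound a0
  have hn3b : 1 ≤ c → n3 ≤ c - 1 := hbound b0
  have hkey : 2 * (d - δ) ≤ (d' - b0) + (d' - a0) :=
    key_arith m c δ n d a0 b0 d' n1 n3 Y.ncard (max c a0) (min (d' - c) (d' - b0))
      hm1 hm hδc hd hnc hnc1 hΔc ha0d hb0d hcount hYcard humax.1 humax.2
      hvmin.1 hvmin.2 hmaxa hmaxb hn1e hn3e hn1b hn3b
  rw [← two_mul]
  exact le_trans hkey (Nat.add_le_add hsupA hsupB)
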